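/- arXiv:1507.01096 — 2 statements merged into one kernel-verified Lean document; each statement's English description precedes it below -/
import Mathlib

section
/- The set H₂ = {±(1,0), ±(0,1), ±(1,1), ±(1,3)} is a nonseparating subset of ℤ/4ℤ ⊕ ℤ/4ℤ. -/
/-!
Both `B` and `A ⧸ B` are cyclic of exponent dividing 4 and `|A| = 16`, so `A ⧸ B ≅ ℤ/4`, and the
generator `a + B` turns the quotient map into a surjective homomorphism `φ : A → ℤ/4`; the coset
number of `±x` is then the absolute least residue `|φ x|`. With `α = φ (1,0)` and `β = φ (0,1)`
the four coset numbers are `|α|, |β|, |α + β|, |α - β|`, and surjectivity makes `α` or `β` odd.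
If both are odd the numbers are `1, 1, 0, 2`; if only one is, three of them are `1`. Either way
the middle two are `1`.
-/

def middleTwoEq (c : Fin 4 → ℕ) : Prop :=
  (Multiset.sort ({c 0, c 1, c 2, c 3} : Multiset ℕ) (· ≤ ·)).getD 1 0 =
  (Multiset.sort ({c 0, c 1, c 2, c 3} : Multiset ℕ) (· ≤ ·)).getD 2 0

/-- `c` is the coset number of the pair `{x, -x}` relative to `B` and the
generator `a + B` of `A ⧸ B`: `0 ≤ c ≤ n/2` and `(c • a + B) ∩ {x, -x} ≠ ∅`. -/
def IsCosetNum {A : Type*} [AddCommGroup A] (B : AddSubgroup A) (a x : A) (c : ℕ) : Prop :=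
  c ≤ Nat.card (A ⧸ B) / 2 ∧ (x - c • a ∈ B ∨ x + c • a ∈ B)

/-- The four pairs `{± h i}` are disjoint and for every cyclic subgroup `B` with
cyclic quotient and every generator of the quotient, the middle two of the four
coset numbers agree. -/
def NonsepTuple {A : Type*} [AddCommGroup A] (h : Fin 4 → A) : Prop :=
  (∀ i j : Fin 4, i ≠ j → h i ≠ h j ∧ h i ≠ -h j) ∧
  ∀ B : AddSubgroup A, IsAddCyclic B → IsAddCyclic (A ⧸ B) →
    ∀ a : A, (∀ x : A ⧸ B, x ∈ AddSubgroup.zmultiples ((QuotientAddGroup.mk a : A ⧸ B))) →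
      ∀ c : Fin 4 → ℕ, (∀ i, IsCosetNum B a (h i) (c i)) → middleTwoEq c

/-- `H` is a nonseparating subset of `A`. -/
def IsNonseparating {A : Type*} [AddCommGroup A] (H : Set A) : Prop :=
  ∃ h : Fin 4 → A, H = (⋃ i, {h i, -h i}) ∧ NonsepTuple h

open QuotientAddGroup AddSubgroup

lemma ZMod.eq_natAbs_valMinAbs_of_le_half {n : ℕ} [NeZero n] {x : ZMod n} {c : ℕ}
    (hc : c ≤ n / 2) (hx : x = c ∨ x = -c) : c = x.valMinAbs.natAbs := by
  rcases hx with rfl | rfl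
  · rw [ZMod.valMinAbs_natCast_of_le_half hc, Int.natAbs_natCast]
  · rw [ZMod.natAbs_valMinAbs_neg, ZMod.valMinAbs_natCast_of_le_half hc, Int.natAbs_natCast]

lemma IsAddCyclic.card_dvd_of_forall_nsmul_eq_zero {G : Type*} [AddGroup G] [IsAddCyclic G]
    {n : ℕ} (h : ∀ g : G, n • g = 0) : Nat.card G ∣ n :=
  IsAddCyclic.exponent_eq_card (α := G) ▸ AddMonoid.exponent_dvd_of_forall_nsmul_eq_zero h

section QuotientCoordinate

variable {A : Type*} [AddCommGroup A] {B : AddSubgroup A} {a : A}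
  (ha : ∀ x : A ⧸ B, x ∈ zmultiples (a : A ⧸ B)) {n : ℕ} (hn : Nat.card (A ⧸ B) = n)

noncomputable def quotientCoord : A →+ ZMod n :=
  (zmodAddEquivOfGenerator ha hn).symm.toAddMonoidHom.comp (mk' B)

lemma quotientCoord_surjective : Function.Surjective (quotientCoord ha hn) :=
  (zmodAddEquivOfGenerator ha hn).symm.surjective.comp (mk'_surjective B)

lemma quotientCoord_eq_natCast_iff (x : A) (c : ℕ) :
    quotientCoord ha hn x = c ↔ x - c • a ∈ B := by
  rw [← eq_iff_sub_mem, quotientCoord, AddMonoidHom.comp_apply, AddEquiv.coe_toAddMonoidHom,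
    AddEquiv.symm_apply_eq, ← Int.cast_natCast, zmodAddEquivOfGenerator_apply_intCast, mk'_apply,
    natCast_zsmul, mk_nsmul]

lemma quotientCoord_eq_neg_natCast_iff (x : A) (c : ℕ) :
    quotientCoord ha hn x = -c ↔ x + c • a ∈ B := by
  rw [← sub_neg_eq_add, ← eq_iff_sub_mem, quotientCoord, AddMonoidHom.comp_apply,
    AddEquiv.coe_toAddMonoidHom, AddEquiv.symm_apply_eq, ← Int.cast_natCast, ← Int.cast_neg,
    zmodAddEquivOfGenerator_apply_intCast, mk'_apply, mk_neg, mk_nsmul, neg_zsmul, natCast_zsmul]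

lemma IsCosetNum.eq_natAbs_valMinAbs [NeZero n] {x : A} {c : ℕ} (h : IsCosetNum B a x c) :
    c = (quotientCoord ha hn x).valMinAbs.natAbs :=
  ZMod.eq_natAbs_valMinAbs_of_le_half (hn ▸ h.1) <|
    h.2.imp (quotientCoord_eq_natCast_iff ha hn x c).mpr
      (quotientCoord_eq_neg_natCast_iff ha hn x c).mpr

end QuotientCoordinate

/-- `Multiset.sort` is implemented by `List.mergeSort`, which the kernel cannot evaluate;
`List.insertionSort` is structurally recursive, so this form can be decided. -/
lemma middleTwoEq_iff_insertionSort (c : Fin 4 → ℕ) :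
    middleTwoEq c ↔ (List.insertionSort (· ≤ ·) (List.ofFn c)).getD 1 0 =
      (List.insertionSort (· ≤ ·) (List.ofFn c)).getD 2 0 := by
  have : ({c 0, c 1, c 2, c 3} : Multiset ℕ) = ↑(List.ofFn c) := rfl
  rw [middleTwoEq, this, Multiset.coe_sort, List.mergeSort_eq_insertionSort]

lemma AddMonoidHom.apply_zmod_prod {n : ℕ} (φ : ZMod n × ZMod n →+ ZMod n) (p : ZMod n × ZMod n) :
    φ p = p.1 * φ (1, 0) + p.2 * φ (0, 1) := by
  have : p = p.1 • ((1, 0) : ZMod n × ZMod n) + p.2 • (0, 1) := by ext <;> simp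
  rw [this, map_add, ZMod.map_smul, ZMod.map_smul, smul_eq_mul, smul_eq_mul]
  simp

lemma card_quotient_eq_of_isAddCyclic {A : Type*} [AddCommGroup A] [Finite A] {B : AddSubgroup A}
    (hB : IsAddCyclic B) (hQ : IsAddCyclic (A ⧸ B)) {e : ℕ} (he : ∀ x : A, e • x = 0)
    (hA : Nat.card A = e ^ 2) : Nat.card (A ⧸ B) = e := by
  have hB_dvd := hB.card_dvd_of_forall_nsmul_eq_zero fun b : B => Subtype.ext (he b)
  have hQ_dvd := hQ.card_dvd_of_forall_nsmul_eq_zero fun q =>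
    QuotientAddGroup.induction_on q fun x => by rw [← mk_nsmul, he, mk_zero]
  have he_pos : 0 < e := Nat.pos_of_ne_zero fun h => by simp [h, Nat.card_pos.ne'] at hA
  have := Nat.le_of_dvd he_pos hB_dvd
  have := Nat.le_of_dvd he_pos hQ_dvd
  nlinarith [card_eq_card_quotient_mul_card_addSubgroup B]

lemma middleTwoEq_of_surjective (φ : ZMod 4 × ZMod 4 →+ ZMod 4) (hφ : Function.Surjective φ) :
    middleTwoEq fun i => (φ (![(1, 0), (0, 1), (1, 1), (1, 3)] i)).valMinAbs.natAbs := by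
  obtain ⟨p, hp⟩ := hφ 1
  rw [φ.apply_zmod_prod] at hp
  have key : ∀ α β : ZMod 4, (∃ p : ZMod 4 × ZMod 4, p.1 * α + p.2 * β = 1) →
      middleTwoEq ![α.valMinAbs.natAbs, β.valMinAbs.natAbs, (α + β).valMinAbs.natAbs,
        (α + 3 * β).valMinAbs.natAbs] := by
    simp only [middleTwoEq_iff_insertionSort]
    decide
  convert key _ _ ⟨p, hp⟩ using 2 with i
  fin_cases i <;> simp [φ.apply_zmod_prod (1, 1), φ.apply_zmod_prod (1, 3)]

/-- `H₂ = {±(1,0), ±(0,1), ±(1,1), ±(1,3)}` is a nonseparating subset of `ℤ/4ℤ ⊕ ℤ/4ℤ`. -/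
theorem stmt_8 :
    IsNonseparating ({(1, 0), -(1, 0), (0, 1), -(0, 1), (1, 1), -(1, 1), (1, 3), -(1, 3)} :
      Set (ZMod 4 × ZMod 4)) := by
  refine ⟨![(1, 0), (0, 1), (1, 1), (1, 3)], ?_, by decide, ?_⟩
  · ext x
    simp only [Set.mem_iUnion, Set.mem_insert_iff, Set.mem_singleton_iff]
    revert x
    decide
  · intro B hB hQ a ha c hc
    have hn : Nat.card ((ZMod 4 × ZMod 4) ⧸ B) = 4 :=
      card_quotient_eq_of_isAddCyclic hB hQ (by decide) (by simp)
    obtain rfl : c = fun i =>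
        (quotientCoord ha hn (![(1, 0), (0, 1), (1, 1), (1, 3)] i)).valMinAbs.natAbs :=
      funext fun i => (hc i).eq_natAbs_valMinAbs ha hn
    exact middleTwoEq_of_surjective _ (quotientCoord_surjective ha hn)
end

section
/- Let A be a finite abelian group, H a nonseparating subset of A, φ : A → A a group automorphism, and h an element of order 2 in A. Then φ(H) + h is a nonseparating subset of A. -/
/-!
Both operations transport the defining data. Under an automorphism `φ`, the pair `(B, a)` for
`φ(H)` corresponds to `(φ⁻¹ B, φ⁻¹ a)` for `H`, with the same coset numbers. Under translation by
an element `h` of order two: if `h ∈ B` the coset numbers do not change; otherwise `h + B` is the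
element of order two of the cyclic group `A ⧸ B`, so `|A ⧸ B| = 2m` and `h ≡ m • a`, and the coset
number `c` of `±x + h` turns into the coset number `m - c` of `±x`. This reverses the order of the
four coset numbers, which preserves the equality of the middle two.
-/

theorem Multiset.sort_map_of_antitone {α β : Type*} [LinearOrder α] [LinearOrder β] {f : α → β}
    (hf : Antitone f) (s : Multiset α) :
    (s.map f).sort (· ≤ ·) = ((s.sort (· ≤ ·)).map f).reverse := by
  conv_lhs => rw [← Multiset.sort_eq s (· ≤ ·)]
  rw [Multiset.map_coe, ← Multiset.coe_reverse, Multiset.coe_sort]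
  apply List.mergeSort_eq_self
  rw [List.pairwise_reverse, List.pairwise_map]
  exact (Multiset.pairwise_sort s _).imp fun hab => hf hab

theorem middleTwoEq_of_middleTwoEq_sub {N : ℕ} {c : Fin 4 → ℕ} (hc : ∀ i, c i ≤ N)
    (h : middleTwoEq fun i => N - c i) : middleTwoEq c := by
  unfold middleTwoEq at h ⊢
  set s : Multiset ℕ := {c 0, c 1, c 2, c 3}
  have hs : ({N - c 0, N - c 1, N - c 2, N - c 3} : Multiset ℕ) = s.map (N - ·) := by simp [s]
  rw [hs, Multiset.sort_map_of_antitone fun _ _ hab => Nat.sub_le_sub_left hab N] at h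
  have hle : ∀ x ∈ s.sort (· ≤ ·), x ≤ N := by
    simp only [Multiset.mem_sort, s, Multiset.insert_eq_cons, Multiset.mem_cons,
      Multiset.mem_singleton]
    rintro x (rfl | rfl | rfl | rfl) <;> apply hc
  obtain ⟨x₀, x₁, x₂, x₃, hsort⟩ :=
    List.length_eq_four.mp (by simp [s] : (s.sort (· ≤ ·)).length = 4)
  rw [hsort] at h hle ⊢
  change N - x₂ = N - x₁ at h
  change x₁ = x₂
  have := hle x₁ (by simp)
  have := hle x₂ (by simp)
  omega

theorem exists_card_eq_two_mul_of_add_self_eq_zero {G : Type*} [AddCommGroup G] [Finite G]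
    {g y : G} (hg : ∀ x, x ∈ AddSubgroup.zmultiples g) (hy : y ≠ 0) (hyy : y + y = 0) :
    ∃ m, Nat.card G = 2 * m ∧ y = m • g := by
  classical
  rw [← addOrderOf_eq_card_of_forall_mem_zmultiples hg]
  obtain ⟨m, hm, rfl⟩ := Finset.mem_image.mp (mem_zmultiples_iff_mem_range_addOrderOf.mp (hg y))
  have hm0 : m ≠ 0 := by rintro rfl; exact hy (zero_nsmul g)
  refine ⟨m, (Nat.eq_of_dvd_of_lt_two_mul (by omega) ?_ ?_).symm, rfl⟩
  · exact addOrderOf_dvd_of_nsmul_eq_zero (by rw [two_mul, add_nsmul, hyy])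
  · have := Finset.mem_range.mp hm; omega

section CosetNumber

variable {A A' : Type*} [AddCommGroup A] [AddCommGroup A'] {B : AddSubgroup A} {a x : A} {c : ℕ}

theorem isCosetNum_iff : IsCosetNum B a x c ↔ c ≤ Nat.card (A ⧸ B) / 2 ∧
    ((x : A ⧸ B) = c • (a : A ⧸ B) ∨ (x : A ⧸ B) = -(c • (a : A ⧸ B))) := by
  simp only [IsCosetNum, ← QuotientAddGroup.mk_nsmul, ← QuotientAddGroup.mk_neg,
    QuotientAddGroup.eq_iff_sub_mem, sub_neg_eq_add]

theorem IsCosetNum.of_add_mem {b : A} (hb : b ∈ B) (h : IsCosetNum B a (x + b) c) :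
    IsCosetNum B a x c := by
  rwa [isCosetNum_iff, QuotientAddGroup.mk_add, (QuotientAddGroup.eq_zero_iff b).mpr hb,
    add_zero, ← isCosetNum_iff] at h

theorem IsCosetNum.sub_of_add {b : A} {m : ℕ} (hn : Nat.card (A ⧸ B) = 2 * m)
    (hb : (b : A ⧸ B) = m • (a : A ⧸ B)) (h : IsCosetNum B a (x + b) c) :
    IsCosetNum B a x (m - c) := by
  rw [isCosetNum_iff, QuotientAddGroup.mk_add, hb] at h
  obtain ⟨hc, hx⟩ := h
  rw [hn] at hc
  have hcm : c ≤ m := by omega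
  refine isCosetNum_iff.mpr ⟨by omega, ?_⟩
  set g : A ⧸ B := QuotientAddGroup.mk a
  have hmm : m • g + m • g = 0 := by rw [← add_nsmul, ← two_mul, ← hn, card_nsmul_eq_zero']
  have hsub : (m - c) • g = m • g - c • g :=
    eq_sub_of_add_eq (by rw [← add_nsmul, Nat.sub_add_cancel hcm])
  rw [hsub]
  rcases hx with hx | hx
  · right
    rw [eq_sub_of_add_eq hx]; abel
  · left
    rw [eq_sub_of_add_eq hx, sub_eq_add_neg, neg_eq_of_add_eq_zero_left hmm]; abel

theorem IsCosetNum.map_equiv (e : A ≃+ A') (h : IsCosetNum B a x c) :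
    IsCosetNum (B.map (e : A →+ A')) (e a) (e x) c := by
  obtain ⟨hc, hx⟩ := h
  refine ⟨?_, ?_⟩
  · rwa [← Nat.card_congr (QuotientAddGroup.congr B _ e rfl).toEquiv]
  · rw [← map_nsmul, ← map_sub, ← map_add]
    exact hx.imp (AddSubgroup.mem_map_of_mem _) (AddSubgroup.mem_map_of_mem _)

end CosetNumber

section Nonseparating

variable {A A' : Type*} [AddCommGroup A] [AddCommGroup A'] {t : Fin 4 → A}

theorem NonsepTuple.map_equiv (e : A ≃+ A') (ht : NonsepTuple t) :
    NonsepTuple fun i => e (t i) := by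
  refine ⟨fun i j hij => ?_, fun B hB hQ a ha c hc => ?_⟩
  · simpa only [← map_neg, ne_eq, e.injective.eq_iff] using ht.1 i j hij
  let B' := B.map (e.symm : A' →+ A)
  let q : (A' ⧸ B) ≃+ (A ⧸ B') := QuotientAddGroup.congr B B' e.symm rfl
  refine ht.2 B' ?_ ?_ (e.symm a) ?_ c fun i => by simpa using (hc i).map_equiv e.symm
  · exact isAddCyclic_of_surjective _ (e.symm.addSubgroupMap B).surjective
  · exact isAddCyclic_of_surjective _ q.surjective
  · intro y
    obtain ⟨x, rfl⟩ := q.surjective y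
    obtain ⟨k, rfl⟩ := ha x
    exact ⟨k, (map_zsmul q k (a : A' ⧸ B)).symm⟩

theorem NonsepTuple.add_of_add_self_eq_zero [Finite A] {h : A} (hh : h + h = 0)
    (ht : NonsepTuple t) : NonsepTuple fun i => t i + h := by
  have hneg : -h = h := neg_eq_of_add_eq_zero_left hh
  refine ⟨fun i j hij => ?_, fun B hB hQ a ha c hc => ?_⟩
  · simpa only [neg_add, hneg, ne_eq, add_left_inj] using ht.1 i j hij
  by_cases hhB : h ∈ B
  · exact ht.2 B hB hQ a ha c fun i => (hc i).of_add_mem hhB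
  obtain ⟨m, hn, hm⟩ := exists_card_eq_two_mul_of_add_self_eq_zero ha
    (mt (QuotientAddGroup.eq_zero_iff h).mp hhB) (by rw [← QuotientAddGroup.mk_add, hh]; rfl)
  have hcm : ∀ i, c i ≤ m := fun i => by have := (hc i).1; omega
  exact middleTwoEq_of_middleTwoEq_sub hcm
    (ht.2 B hB hQ a ha _ fun i => (hc i).sub_of_add hn hm)

variable {H : Set A}

theorem IsNonseparating.image_equiv (e : A ≃+ A') (hH : IsNonseparating H) :
    IsNonseparating (e '' H) := by
  obtain ⟨t, rfl, ht⟩ := hH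
  exact ⟨fun i => e (t i), by simp [Set.image_iUnion, Set.image_insert_eq], ht.map_equiv e⟩

theorem IsNonseparating.image_add [Finite A] {h : A} (hh : h + h = 0) (hH : IsNonseparating H) :
    IsNonseparating ((· + h) '' H) := by
  obtain ⟨t, rfl, ht⟩ := hH
  refine ⟨fun i => t i + h, ?_, ht.add_of_add_self_eq_zero hh⟩
  rw [Set.image_iUnion]
  refine Set.iUnion_congr fun i => ?_
  rw [Set.image_pair, neg_add_rev, neg_eq_of_add_eq_zero_left hh, add_comm h]

end Nonseparating

/-- If `H` is a nonseparating subset of a finite abelian group `A`, `φ` an automorphism of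
`A` and `h` an element of order 2, then `φ(H) + h` is nonseparating. -/
theorem stmt_9 {A : Type*} [AddCommGroup A] [Finite A] (H : Set A)
    (hH : IsNonseparating H) (φ : A ≃+ A) (h : A) (hh : addOrderOf h = 2) :
    IsNonseparating ((fun x => φ x + h) '' H) := by
  have hh2 : h + h = 0 := by rw [← two_nsmul, ← hh, addOrderOf_nsmul_eq_zero]
  simpa only [Set.image_image] using (hH.image_equiv φ).image_add hh2
end
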